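/- Let R be a commutative ring, q ∈ R, and (A, σ_A) a twisted commutative R-algebra with y ∈ A satisfying σ_A(y) = qy. Let σ be the σ_A-semilinear ring endomorphism of A⟨ξ⟩_{q,y} with σ(ξ^{[n]}) = Σ_{i=0}^{n} y^i ξ^{[n−i]}. Then for all m, n ∈ ℕ: ξ^{[n]} · σ^n(ξ^{[m]}) = (m+n choose n)_q ξ^{[n+m]} in A⟨ξ⟩_{q,y}. -/

import Mathlib

def qInt {R : Type*} [CommRing R] (q : R) (m : ℕ) : R := ∑ i ∈ Finset.range m, q ^ i

def qChoose {R : Type*} [CommRing R] (q : R) : ℕ → ℕ → R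
  | _, 0 => 1
  | 0, _ + 1 => 0
  | n + 1, k + 1 => qChoose q n k + q ^ (k + 1) * qChoose q n (k + 1)

def dpCoeff {A : Type*} [CommRing A] (q y : A) (m n i : ℕ) : A :=
  (-1 : A) ^ i * q ^ (i * (i - 1) / 2) * qChoose q (m + n - i) m * qChoose q m i * y ^ i

/-!
Write `σ^n(ξ^{[m]})` as `F(y∂) ξ^{[m]}` for a power series `F` over `R`. Since `σ_A(y) = qy` and
`σ(ξ^{[m]}) = (1 - y∂)⁻¹ ξ^{[m]}`, one application of `σ` turns `F(X)` into `F(qX) / (1 - X)`, so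
`σ^n` corresponds to `1 / (X; q)_n`. By the multiplication rule, `ξ^{[n]} · F(y∂) ξ^{[m]}` is
`Σ_s c_s y^s (n+m-s choose n)_q ξ^{[n+m-s]}` with `c_s` the coefficients of `F · (X; q)_n`; for
`F = 1 / (X; q)_n` only `s = 0` survives.
-/

open Finset PowerSeries

noncomputable section

section QBinomial

variable {R : Type*} [CommRing R] (q : R)

@[simp]
lemma qChoose_zero_right (n : ℕ) : qChoose q n 0 = 1 := by cases n <;> rfl

@[simp]
lemma qChoose_zero_succ (k : ℕ) : qChoose q 0 (k + 1) = 0 := rfl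

lemma qChoose_succ_succ (n k : ℕ) :
    qChoose q (n + 1) (k + 1) = qChoose q n k + q ^ (k + 1) * qChoose q n (k + 1) := rfl

lemma qChoose_eq_zero_of_lt {n k : ℕ} (h : n < k) : qChoose q n k = 0 := by
  induction n generalizing k with
  | zero => obtain ⟨k, rfl⟩ := Nat.exists_eq_add_one_of_ne_zero (by omega : k ≠ 0); rfl
  | succ n ih =>
    obtain ⟨k, rfl⟩ := Nat.exists_eq_add_one_of_ne_zero (by omega : k ≠ 0)
    rw [qChoose_succ_succ, ih (by omega), ih (by omega), mul_zero, add_zero]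

lemma map_qChoose {S F : Type*} [CommRing S] [FunLike F R S] [RingHomClass F R S] (f : F)
    (n k : ℕ) : f (qChoose q n k) = qChoose (f q) n k := by
  induction n generalizing k with
  | zero => cases k <;> simp
  | succ n ih => cases k <;> simp [qChoose_succ_succ, ih]

/-- The q-Pochhammer symbol `(X; q)_n = ∏_{j < n} (1 - q^j X)`, written through its expansion
by the q-binomial theorem. -/
def qPochhammer (n : ℕ) : R⟦X⟧ :=
  PowerSeries.mk fun i => (-1) ^ i * q ^ (i * (i - 1) / 2) * qChoose q n i

def qPochhammerInv : ℕ → R⟦X⟧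
  | 0 => 1
  | n + 1 => rescale q (qPochhammerInv n) * PowerSeries.mk 1

lemma coeff_qPochhammer (n i : ℕ) :
    coeff i (qPochhammer q n) = (-1) ^ i * q ^ (i * (i - 1) / 2) * qChoose q n i :=
  coeff_mk _ _

lemma qPochhammer_zero : qPochhammer q 0 = 1 := by
  ext (_ | i) <;> simp [coeff_qPochhammer]

lemma qPochhammer_succ (n : ℕ) :
    qPochhammer q (n + 1) = (1 - X) * rescale q (qPochhammer q n) := by
  ext (_ | i)
  · simp only [sub_mul, one_mul, map_sub, coeff_zero_X_mul, coeff_rescale, coeff_qPochhammer]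
    simp
  · have htri : (i + 1) * (i + 1 - 1) / 2 = i * (i - 1) / 2 + i := by
      rw [← Nat.choose_two_right, ← Nat.choose_two_right, Nat.choose_succ_succ,
        Nat.choose_one_right, add_comm]
    simp only [sub_mul, one_mul, map_sub, coeff_succ_X_mul, coeff_rescale, coeff_qPochhammer,
      qChoose_succ_succ, htri]
    ring

lemma qPochhammer_mul_qPochhammerInv (n : ℕ) : qPochhammer q n * qPochhammerInv q n = 1 := by
  induction n with
  | zero => rw [qPochhammer_zero, qPochhammerInv, one_mul]
  | succ n ih =>
    calc qPochhammer q (n + 1) * qPochhammerInv q (n + 1)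
        = rescale q (qPochhammer q n * qPochhammerInv q n) * (PowerSeries.mk 1 * (1 - X)) := by
          rw [qPochhammer_succ, qPochhammerInv, map_mul]; ring
      _ = 1 := by rw [ih, map_one, mk_one_mul_one_sub_eq_one, one_mul]

end QBinomial

lemma sum_range_sum_range_sub_eq_sum_antidiagonal {M : Type*} [AddCommMonoid M] (m : ℕ)
    (g : ℕ → ℕ → M) :
    ∑ k ∈ range (m + 1), ∑ i ∈ range (m - k + 1), g k i =
      ∑ s ∈ range (m + 1), ∑ p ∈ antidiagonal s, g p.1 p.2 := by
  calc ∑ k ∈ range (m + 1), ∑ i ∈ range (m - k + 1), g k i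
      = ∑ k ∈ range (m + 1), ∑ i ∈ range (m + 1 - k), g k i :=
        sum_congr rfl fun k hk => by rw [Nat.sub_add_comm (mem_range_succ_iff.1 hk)]
    _ = _ := by
      rw [← sum_range_diag_flip]
      exact sum_congr rfl fun s _ => (Nat.sum_antidiagonal_eq_sum_range_succ g s).symm

section TwistedDividedPowers

variable {R A B : Type*} [CommRing R] [CommRing A] [Algebra R A] [CommRing B] [Algebra A B]

/-- `f(y∂) ξ^{[m]}`, where `∂ ξ^{[m]} = ξ^{[m-1]}`. -/
def lowerApply (y : A) (b : Module.Basis ℕ A B) (f : R⟦X⟧) (m : ℕ) : B :=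
  ∑ k ∈ range (m + 1), (algebraMap R A (coeff k f) * y ^ k) • b (m - k)

lemma lowerApply_one (y : A) (b : Module.Basis ℕ A B) (m : ℕ) :
    lowerApply y b (1 : R⟦X⟧) m = b m := by
  simp [lowerApply, coeff_one]

lemma apply_lowerApply (q : R) (σA : A →ₐ[R] A) (y : A)
    (hy : σA y = algebraMap R A q * y) (b : Module.Basis ℕ A B) (σB : B → B)
    (hadd : ∀ u v : B, σB (u + v) = σB u + σB v)
    (hsmul : ∀ (a : A) (u : B), σB (a • u) = σA a • σB u)
    (hrule : ∀ n : ℕ, σB (b n) = ∑ i ∈ range (n + 1), y ^ i • b (n - i)) (f : R⟦X⟧) (m : ℕ) :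
    σB (lowerApply y b f m) = lowerApply y b (rescale q f * PowerSeries.mk 1) m := by
  have hsum (t : Finset ℕ) (g : ℕ → B) : σB (∑ k ∈ t, g k) = ∑ k ∈ t, σB (g k) :=
    map_sum (AddMonoidHom.mk' σB hadd) g t
  calc σB (lowerApply y b f m)
      = ∑ k ∈ range (m + 1), ∑ j ∈ range (m - k + 1),
          (algebraMap R A (q ^ k * coeff k f * 1) * y ^ (k + j)) • b (m - (k + j)) := by
        rw [lowerApply, hsum]
        refine sum_congr rfl fun k _ => ?_
        rw [hsmul, hrule, smul_sum]
        refine sum_congr rfl fun j _ => ?_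
        rw [smul_smul, Nat.sub_sub]
        congr 1
        simp only [map_mul, map_pow, AlgHom.commutes, hy, map_one]
        ring
    _ = lowerApply y b (rescale q f * PowerSeries.mk 1) m := by
        rw [sum_range_sum_range_sub_eq_sum_antidiagonal, lowerApply]
        refine sum_congr rfl fun s _ => ?_
        rw [coeff_mul, map_sum, sum_mul, sum_smul]
        refine sum_congr rfl fun p hp => ?_
        rw [mem_antidiagonal.1 hp, coeff_rescale, coeff_mk]
        rfl

lemma iterate_apply_basis_eq_lowerApply (q : R) (σA : A →ₐ[R] A) (y : A)
    (hy : σA y = algebraMap R A q * y) (b : Module.Basis ℕ A B) (σB : B → B)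
    (hadd : ∀ u v : B, σB (u + v) = σB u + σB v)
    (hsmul : ∀ (a : A) (u : B), σB (a • u) = σA a • σB u)
    (hrule : ∀ n : ℕ, σB (b n) = ∑ i ∈ range (n + 1), y ^ i • b (n - i)) (n m : ℕ) :
    σB^[n] (b m) = lowerApply y b (qPochhammerInv q n) m := by
  induction n with
  | zero => rw [Function.iterate_zero_apply, qPochhammerInv, lowerApply_one]
  | succ n ih =>
    rw [Function.iterate_succ_apply', ih, apply_lowerApply q σA y hy b σB hadd hsmul hrule,
      qPochhammerInv]

lemma dpCoeff_algebraMap (q : R) (y : A) (n m i : ℕ) :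
    dpCoeff (algebraMap R A q) y n m i = algebraMap R A (coeff i (qPochhammer q n)) *
      qChoose (algebraMap R A q) (n + m - i) n * y ^ i := by
  simp only [dpCoeff, coeff_qPochhammer, map_mul, map_pow, map_neg, map_one, map_qChoose]
  ring

lemma basis_mul_lowerApply (q : R) (y : A) (b : Module.Basis ℕ A B)
    (hb : ∀ m n : ℕ, b m * b n = ∑ i ∈ range (min m n + 1),
      dpCoeff (algebraMap R A q) y m n i • b (m + n - i))
    (f : R⟦X⟧) (n m : ℕ) :
    b n * lowerApply y b f m = ∑ s ∈ range (m + 1),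
      (algebraMap R A (coeff s (f * qPochhammer q n)) * y ^ s *
        qChoose (algebraMap R A q) (n + m - s) n) • b (n + m - s) := by
  calc b n * lowerApply y b f m
      = ∑ k ∈ range (m + 1), ∑ i ∈ range (m - k + 1),
          (algebraMap R A (coeff k f * coeff i (qPochhammer q n)) * y ^ (k + i) *
            qChoose (algebraMap R A q) (n + m - (k + i)) n) • b (n + m - (k + i)) := by
        rw [lowerApply, mul_sum]
        refine sum_congr rfl fun k hk => ?_
        have hkm := mem_range_succ_iff.1 hk
        rw [mul_smul_comm, hb, smul_sum,
          sum_subset (range_subset_range.2 (by omega : min n (m - k) + 1 ≤ m - k + 1))]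
        · refine sum_congr rfl fun i hi => ?_
          have hidx : n + (m - k) - i = n + m - (k + i) := by
            simp only [mem_range] at hi
            omega
          rw [smul_smul, dpCoeff_algebraMap, hidx, map_mul, pow_add]
          congr 1
          ring
        · intro i hi' hi
          simp only [mem_range, not_lt] at hi hi'
          rw [dpCoeff_algebraMap, coeff_qPochhammer, qChoose_eq_zero_of_lt q (by omega)]
          simp
    _ = _ := by
        rw [sum_range_sum_range_sub_eq_sum_antidiagonal]
        refine sum_congr rfl fun s _ => ?_
        rw [coeff_mul, map_sum, sum_mul, sum_mul, sum_smul]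
        refine sum_congr rfl fun p hp => ?_
        rw [mem_antidiagonal.1 hp]

end TwistedDividedPowers

end

/-- On the twisted divided power polynomial ring `B = A⟨ξ⟩_{q,y}` (basis `b`), if `σ_B` is the
`σ_A`-semilinear ring endomorphism with `σ_B(ξ^{[n]}) = Σ_{i≤n} y^i ξ^{[n−i]}`, then
`ξ^{[n]} · σ_B^n(ξ^{[m]}) = (m+n choose n)_q ξ^{[n+m]}` for all `m, n`. -/
theorem statement12 {R A B : Type*} [CommRing R] [CommRing A] [Algebra R A]
    [CommRing B] [Algebra A B]
    (q : R) (σA : A →ₐ[R] A) (y : A) (hy : σA y = algebraMap R A q * y)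
    (b : Module.Basis ℕ A B)
    (hb : ∀ m n : ℕ, b m * b n = ∑ i ∈ Finset.range (min m n + 1),
      dpCoeff (algebraMap R A q) y m n i • b (m + n - i))
    (σB : B → B)
    (hadd : ∀ u v : B, σB (u + v) = σB u + σB v)
    (hsmul : ∀ (a : A) (u : B), σB (a • u) = σA a • σB u)
    (hrule : ∀ n : ℕ, σB (b n) = ∑ i ∈ Finset.range (n + 1), y ^ i • b (n - i)) :
    ∀ m n : ℕ, b n * σB^[n] (b m) = qChoose (algebraMap R A q) (m + n) n • b (n + m) := by
  intro m n
  rw [iterate_apply_basis_eq_lowerApply q σA y hy b σB hadd hsmul hrule,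
    basis_mul_lowerApply q y b hb, mul_comm, qPochhammer_mul_qPochhammerInv, sum_range_succ']
  simp [coeff_one, add_comm m n]
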